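/- For all real x and all δ ≠ 0, log σ(x) ≥ (x−δ)/2 − λ(δ)(x² − δ²) + log σ(δ), where σ(x) = 1/(1+e^{−x}) and λ(δ) = (1/(2δ))(σ(δ) − 1/2). -/

import Mathlib

noncomputable def logisticSigmoid (x : ℝ) : ℝ := 1 / (1 + Real.exp (-x))

noncomputable def jaakkolaLambda (δ : ℝ) : ℝ := (logisticSigmoid δ - 1/2) / (2 * δ)

/-! Since `σ x = exp (x/2) / (2 cosh (x/2))`, the bound is equivalent to
`log cosh t ≤ log cosh d + c (t² - d²)` with `t = x/2`, `d = δ/2`, `c = tanh d / (2d)`.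
The function `log cosh t - c t²` is even, and for `t > 0` its derivative `t (tanh t / t - tanh d / d)`
is `≥ 0` below `|d|` and `≤ 0` above it, because `tanh t / t` decreases on `(0, ∞)`. -/

open Real Set

namespace Real

theorem hasDerivAt_tanh (t : ℝ) : HasDerivAt tanh (1 / cosh t ^ 2) t := by
  have h : HasDerivAt (fun s => sinh s / cosh s) _ t :=
    (hasDerivAt_sinh t).div (hasDerivAt_cosh t) (cosh_pos t).ne'
  rw [show tanh = fun s => sinh s / cosh s from funext tanh_eq_sinh_div_cosh]
  exact h.congr_deriv (by rw [← cosh_sq_sub_sinh_sq t]; ring)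

theorem self_le_sinh_mul_cosh {t : ℝ} (ht : 0 ≤ t) : t ≤ sinh t * cosh t := by
  have := self_le_sinh_iff.mpr (by positivity : 0 ≤ 2 * t)
  rw [sinh_two_mul] at this
  linarith

theorem antitoneOn_tanh_div_self : AntitoneOn (fun t => tanh t / t) (Ioi 0) := by
  have hderiv : ∀ t ∈ Ioi (0 : ℝ), HasDerivAt (fun t => tanh t / t)
      ((1 / cosh t ^ 2 * t - tanh t * 1) / t ^ 2) t :=
    fun t ht => (hasDerivAt_tanh t).div (hasDerivAt_id t) ht.ne'
  refine antitoneOn_of_hasDerivWithinAt_nonpos (convex_Ioi 0)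
    (fun t ht => (hderiv t ht).continuousAt.continuousWithinAt)
    (fun t ht => (hderiv t (interior_subset ht)).hasDerivWithinAt) fun t ht => ?_
  rw [interior_Ioi] at ht
  have hc := cosh_pos t
  have key := self_le_sinh_mul_cosh ht.le
  -- the numerator is `(t - sinh t * cosh t) / cosh t ^ 2`
  rw [tanh_eq_sinh_div_cosh]
  apply div_nonpos_of_nonpos_of_nonneg _ (by positivity)
  rw [sub_nonpos, div_mul_eq_mul_div, one_mul, mul_one, div_le_div_iff₀ (by positivity) hc]
  nlinarith

theorem log_cosh_le_of_pos {d t : ℝ} (hd : 0 < d) (ht : 0 ≤ t) :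
    log (cosh t) ≤ log (cosh d) + tanh d / (2 * d) * (t ^ 2 - d ^ 2) := by
  set c := tanh d / (2 * d)
  set h : ℝ → ℝ := fun s => log (cosh s) - c * s ^ 2
  have hderiv (s : ℝ) : HasDerivAt h (tanh s - 2 * c * s) s :=
    ((hasDerivAt_cosh s).log (cosh_pos s).ne').sub ((hasDerivAt_pow 2 s).const_mul c)
      |>.congr_deriv (by rw [tanh_eq_sinh_div_cosh]; ring)
  have hcont : Continuous h := continuous_iff_continuousAt.mpr fun s => (hderiv s).continuousAt
  have hslope {s : ℝ} (hs : 0 < s) : 2 * c * s = s * (tanh d / d) := by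
    simp only [c]; field_simp
  have hmono : MonotoneOn h (Icc 0 d) := by
    refine monotoneOn_of_hasDerivWithinAt_nonneg (convex_Icc 0 d) hcont.continuousOn
      (fun s _ => (hderiv s).hasDerivWithinAt) fun s hs => ?_
    rw [interior_Icc] at hs
    have := antitoneOn_tanh_div_self hs.1 hd hs.2.le
    rw [sub_nonneg, hslope hs.1, ← le_div_iff₀' hs.1]
    exact this
  have hanti : AntitoneOn h (Ici d) := by
    refine antitoneOn_of_hasDerivWithinAt_nonpos (convex_Ici d) hcont.continuousOn
      (fun s _ => (hderiv s).hasDerivWithinAt) fun s hs => ?_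
    rw [interior_Ici] at hs
    have hs0 : 0 < s := hd.trans hs
    have := antitoneOn_tanh_div_self hd hs0 hs.le
    rw [sub_nonpos, hslope hs0, ← div_le_iff₀' hs0]
    exact this
  have hmax : h t ≤ h d := by
    rcases le_total t d with htd | hdt
    · exact hmono ⟨ht, htd⟩ (right_mem_Icc.mpr hd.le) htd
    · exact hanti (mem_Ici.mpr le_rfl) hdt hdt
  simp only [h] at hmax
  linarith

theorem log_cosh_le {d : ℝ} (hd : d ≠ 0) (t : ℝ) :
    log (cosh t) ≤ log (cosh d) + tanh d / (2 * d) * (t ^ 2 - d ^ 2) := by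
  have h := log_cosh_le_of_pos (abs_pos.mpr hd) (abs_nonneg t)
  have heven : tanh |d| / (2 * |d|) = tanh d / (2 * d) := by
    rcases abs_choice d with hd' | hd' <;> rw [hd']
    rw [tanh_neg]; ring
  rwa [cosh_abs, cosh_abs, sq_abs, sq_abs, heven] at h

end Real

theorem logisticSigmoid_eq (x : ℝ) : logisticSigmoid x = exp (x / 2) / (2 * cosh (x / 2)) := by
  have hx : exp (-x) = exp (-(x / 2)) / exp (x / 2) := by rw [← exp_sub]; ring_nf
  rw [logisticSigmoid, cosh_eq, hx]
  field_simp

theorem logisticSigmoid_sub_half (x : ℝ) : logisticSigmoid x - 1 / 2 = tanh (x / 2) / 2 := by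
  rw [logisticSigmoid_eq, tanh_eq_sinh_div_cosh, ← cosh_add_sinh (x / 2)]
  field_simp
  ring

theorem jaakkolaLambda_eq (δ : ℝ) : jaakkolaLambda δ = tanh (δ / 2) / (4 * δ) := by
  rw [jaakkolaLambda, logisticSigmoid_sub_half, div_div]
  ring

theorem log_logisticSigmoid (x : ℝ) :
    log (logisticSigmoid x) = x / 2 - log 2 - log (cosh (x / 2)) := by
  rw [logisticSigmoid_eq, log_div (exp_ne_zero _) (by positivity),
    log_mul two_ne_zero (cosh_pos _).ne', log_exp]
  ring

theorem jaakkola_bound (x δ : ℝ) (hδ : δ ≠ 0) :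
    Real.log (logisticSigmoid x) ≥
      (x - δ) / 2 - jaakkolaLambda δ * (x ^ 2 - δ ^ 2) + Real.log (logisticSigmoid δ) := by
  have h := log_cosh_le (div_ne_zero hδ two_ne_zero) (x / 2)
  have hlam : tanh (δ / 2) / (2 * (δ / 2)) * ((x / 2) ^ 2 - (δ / 2) ^ 2) =
      jaakkolaLambda δ * (x ^ 2 - δ ^ 2) := by
    rw [jaakkolaLambda_eq]
    field_simp
    ring
  rw [log_logisticSigmoid, log_logisticSigmoid]
  linarith
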